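/- Let B be a standard one-dimensional Brownian motion. For all real numbers c > 1, M > 1 and a > 0, P( sup_{1 ≤ t ≤ M} |B_t|/√t ≥ a ) ≤ 4·( (log M)/(log c) + 1 )·(c/a)·exp( −(1/2)·(a/c)² ). -/

import Mathlib

open MeasureTheory ProbabilityTheory Set

noncomputable section

/-- `B` is a standard one-dimensional Brownian motion started at `0` under the
probability measure `P` (only its behavior at nonnegative times is constrained):
it starts at `0`, has continuous paths, and has independent increments with
`B t - B s` Gaussian of mean `0` and variance `t - s` for `0 ≤ s ≤ t`. -/
structure IsBrownianMotion {Ω : Type*} [MeasurableSpace Ω] (P : Measure Ω)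
    (B : ℝ → Ω → ℝ) : Prop where
  isProb : IsProbabilityMeasure P
  init : ∀ ω, B 0 ω = 0
  cont : ∀ ω, Continuous fun t => B t ω
  meas : ∀ t, Measurable (B t)
  gauss : ∀ s t : ℝ, 0 ≤ s → s ≤ t →
    Measure.map (fun ω => B t ω - B s ω) P = gaussianReal 0 (t - s).toNNReal
  indep : ∀ (n : ℕ) (ts : Fin (n + 1) → ℝ), (∀ i, 0 ≤ ts i) → Monotone ts →
    iIndepFun (m := fun _ => (inferInstance : MeasurableSpace ℝ))
      (fun (i : Fin n) (ω : Ω) => B (ts i.succ) ω - B (ts i.castSucc) ω) P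

/-- The restriction of a process to nonnegative times, as a path-valued map. -/
def nnPath {Ω : Type*} (W : ℝ → Ω → ℝ) (ω : Ω) : {t : ℝ // 0 ≤ t} → ℝ :=
  fun t => W t.1 ω

/-- `W` is a two-sided standard Brownian motion under `P`: `(W t)_{t ≥ 0}` and
`(W (-t))_{t ≥ 0}` are independent standard Brownian motions started at `0`. -/
structure IsTwoSidedBM {Ω : Type*} [MeasurableSpace Ω] (P : Measure Ω)
    (W : ℝ → Ω → ℝ) : Prop where
  pos : IsBrownianMotion P fun t ω => W t ω
  neg : IsBrownianMotion P fun t ω => W (-t) ω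
  indep : IndepFun (nnPath W) (nnPath fun t ω => W (-t) ω) P

/-- `f` admits an `x`-minimum at `y₀`. -/
def xMinimumAt (f : ℝ → ℝ) (x y₀ : ℝ) : Prop :=
  ∃ a b : ℝ, a < y₀ ∧ y₀ < b ∧ (∀ y ∈ Icc a b, f y₀ ≤ f y) ∧
    f y₀ + x ≤ f a ∧ f y₀ + x ≤ f b

/-- `f` admits an `x`-maximum at `y₀`. -/
def xMaximumAt (f : ℝ → ℝ) (x y₀ : ℝ) : Prop :=
  xMinimumAt (fun t => -f t) x y₀

/-- `y₀` is an `x`-extremum of `f`. -/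
def xExtremumAt (f : ℝ → ℝ) (x y₀ : ℝ) : Prop :=
  xMinimumAt f x y₀ ∨ xMaximumAt f x y₀

/-- `x₁(f, x)`: the smallest positive `x`-extremum of `f`. -/
def xOnePt (f : ℝ → ℝ) (x : ℝ) : ℝ :=
  sInf {y : ℝ | 0 < y ∧ xExtremumAt f x y}

/-- `x₀(f, x)`: the largest nonpositive `x`-extremum of `f`. -/
def xZeroPt (f : ℝ → ℝ) (x : ℝ) : ℝ :=
  sSup {y : ℝ | y ≤ 0 ∧ xExtremumAt f x y}

attribute [local instance] Classical.propDecidable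

/-- `b_x(f)`: that one of `x₀(f,x)`, `x₁(f,x)` which is an `x`-minimum of `f`. -/
def bProc (f : ℝ → ℝ) (x : ℝ) : ℝ :=
  if xMinimumAt f x (xOnePt f x) then xOnePt f x else xZeroPt f x

/-- `g` jumps at `x`: `g` is not locally constant at `x`. -/
def jumpsAt (g : ℝ → ℝ) (x : ℝ) : Prop :=
  ¬ ∃ ε > 0, ∀ y ∈ Ioo (x - ε) (x + ε), g y = g x

/-- `W^#(x, y)`: the maximal ascent of `f` encountered travelling from `x` to `y`. -/
def sharp (f : ℝ → ℝ) (x y : ℝ) : ℝ :=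
  if x ≤ y then sSup {d : ℝ | ∃ u v : ℝ, x ≤ u ∧ u ≤ v ∧ v ≤ y ∧ d = f v - f u}
  else sSup {d : ℝ | ∃ u v : ℝ, y ≤ v ∧ v ≤ u ∧ u ≤ x ∧ d = f v - f u}

/-- The running infimum `inf_{0 ≤ u ≤ t} W u ω`. -/
def runInf {Ω : Type*} (W : ℝ → Ω → ℝ) (ω : Ω) (t : ℝ) : ℝ :=
  sInf ((fun u => W u ω) '' Icc 0 t)

/-- The running supremum `sup_{0 ≤ u ≤ t} W u ω`. -/
def runSup {Ω : Type*} (W : ℝ → Ω → ℝ) (ω : Ω) (t : ℝ) : ℝ :=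
  sSup ((fun u => W u ω) '' Icc 0 t)

/-- `τ_r⁺`: the first time the process rises `r` above its running minimum. -/
def tauPlus {Ω : Type*} (W : ℝ → Ω → ℝ) (r : ℝ) (ω : Ω) : ℝ :=
  sInf {s : ℝ | 0 ≤ s ∧ W s ω - runInf W ω s = r}

/-- `β_r⁺`: the first time the process attains the minimum value it reaches
before time `τ_r⁺`. -/
def betaPlus {Ω : Type*} (W : ℝ → Ω → ℝ) (r : ℝ) (ω : Ω) : ℝ :=
  sInf {s : ℝ | 0 ≤ s ∧ W s ω = runInf W ω (tauPlus W r ω)}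

/-! Split `[1, M]` into the `⌊log_c M⌋₊ + 1` blocks `[c^k, c^(k+1)]`. On the `k`-th block,
`|B_t| / √t ≥ a` forces `|B|` to reach `a c^(k/2)` before time `c^(k+1)`. The reflection
inequality `P(max_{[0,T]} B ≥ x) ≤ 2 P(B_T ≥ x)`, applied to `B` and `-B`, together with the
Gaussian tail bound `P(N(0,T) ≥ x) ≤ √T/x · e^{-x²/2T}`, bounds this by `4 (√c/a) e^{-a²/2c}`,
which is at most `4 (c/a) e^{-(a/c)²/2}`.

The reflection inequality is proved on a finite grid by stopping at the first grid time where
`B ≥ x`: the increment from there to `T` is independent of the path so far and is nonnegative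
with probability at least `1/2`. Continuity of paths then passes to `[0, T]` along nested dyadic
grids. -/

open Real Filter Topology
open scoped NNReal ENNReal

lemma integrableOn_and_integral_Ioi_mul_exp_neg_sq_div {s : ℝ} (hs : 0 < s) {y : ℝ} (hy : 0 ≤ y) :
    IntegrableOn (fun t => t * exp (-t ^ 2 / (2 * s))) (Ioi y) ∧
      ∫ t in Ioi y, t * exp (-t ^ 2 / (2 * s)) = s * exp (-y ^ 2 / (2 * s)) := by
  have hderiv : ∀ t ∈ Ici y, HasDerivAt (fun t => -s * exp (-t ^ 2 / (2 * s)))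
      (t * exp (-t ^ 2 / (2 * s))) t := by
    intro t _
    have h : HasDerivAt (fun t => -t ^ 2 / (2 * s)) (-(2 * t) / (2 * s)) t := by
      simpa using ((hasDerivAt_pow 2 t).fun_neg).div_const (2 * s)
    exact (h.exp.const_mul (-s)).congr_deriv (by field_simp)
  have hnonneg : ∀ t ∈ Ioi y, 0 ≤ t * exp (-t ^ 2 / (2 * s)) :=
    fun t ht => mul_nonneg (hy.trans (le_of_lt ht)) (exp_pos _).le
  have hlim : Tendsto (fun t => -s * exp (-t ^ 2 / (2 * s))) atTop (𝓝 0) := by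
    have : Tendsto (fun t : ℝ => -t ^ 2 / (2 * s)) atTop atBot := by
      simp_rw [neg_div]
      exact tendsto_neg_atTop_atBot.comp
        ((tendsto_pow_atTop two_ne_zero).atTop_div_const (by positivity))
    simpa using (tendsto_exp_atBot.comp this).const_mul (-s)
  refine ⟨integrableOn_Ioi_deriv_of_nonneg' hderiv hnonneg hlim, ?_⟩
  rw [integral_Ioi_of_hasDerivAt_of_nonneg' hderiv hnonneg hlim]
  ring

lemma gaussianReal_Ici_le {v : ℝ≥0} (hv : v ≠ 0) {y : ℝ} (hy : 0 < y) :
    gaussianReal 0 v (Ici y) ≤ ENNReal.ofReal (√v / y * exp (-y ^ 2 / (2 * v))) := by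
  have hv' : (0 : ℝ) < v := NNReal.coe_pos.2 (pos_iff_ne_zero.2 hv)
  obtain ⟨hint, hval⟩ := integrableOn_and_integral_Ioi_mul_exp_neg_sq_div hv' hy.le
  rw [gaussianReal_apply_eq_integral 0 hv, integral_Ici_eq_integral_Ioi]
  refine ENNReal.ofReal_le_ofReal ?_
  calc ∫ t in Ioi y, gaussianPDFReal 0 v t
      ≤ ∫ t in Ioi y, (√(2 * π * v))⁻¹ / y * (t * exp (-t ^ 2 / (2 * v))) := by
        refine setIntegral_mono_on (integrable_gaussianPDFReal 0 v).integrableOn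
          (hint.const_mul _) measurableSet_Ioi fun t ht => ?_
        rw [gaussianPDFReal, sub_zero]
        calc (√(2 * π * v))⁻¹ * exp (-t ^ 2 / (2 * v))
            = (√(2 * π * v))⁻¹ / y * (y * exp (-t ^ 2 / (2 * v))) := by field_simp
          _ ≤ _ := by gcongr; exact le_of_lt ht
    _ = (√(2 * π * v))⁻¹ * v / y * exp (-y ^ 2 / (2 * v)) := by
        rw [integral_const_mul, hval]
        ring
    _ ≤ √v / y * exp (-y ^ 2 / (2 * v)) := by
        gcongr
        rw [inv_mul_le_iff₀ (by positivity), ← sqrt_mul (by positivity)]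
        calc (v : ℝ) = √(v * v) := (sqrt_mul_self hv'.le).symm
          _ ≤ _ := sqrt_le_sqrt (by nlinarith [pi_gt_three])

lemma inv_two_le_gaussianReal_Ici_zero (v : ℝ≥0) : 2⁻¹ ≤ gaussianReal 0 v (Ici 0) := by
  have hsymm : gaussianReal 0 v (Iic 0) = gaussianReal 0 v (Ici 0) := by
    have := congrArg (· (Ici (0 : ℝ))) (gaussianReal_map_neg (μ := 0) (v := v))
    simpa [Measure.map_apply measurable_neg measurableSet_Ici] using this
  have : 1 ≤ 2 * gaussianReal 0 v (Ici 0) := calc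
    1 = gaussianReal 0 v (Iic 0 ∪ Ici 0) := by rw [Iic_union_Ici, measure_univ]
    _ ≤ gaussianReal 0 v (Iic 0) + gaussianReal 0 v (Ici 0) := measure_union_le _ _
    _ = 2 * gaussianReal 0 v (Ici 0) := by rw [hsymm, two_mul]
  exact (ENNReal.inv_le_iff_le_mul (by simp) (by simp)).2 this

lemma tendsto_measure_Ici_sub (μ : Measure ℝ) [IsFiniteMeasure μ] (x : ℝ) :
    Tendsto (fun ε => μ (Ici (x - ε))) (𝓝[>] 0) (𝓝 (μ (Ici x))) := by
  have h : ⋂ ε > (0 : ℝ), Ici (x - ε) = Ici x := by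
    ext y
    simp only [mem_iInter, mem_Ici]
    exact ⟨fun h => le_of_forall_pos_le_add fun ε hε => by linarith [h ε hε],
      fun h ε hε => by linarith⟩
  rw [← h]
  exact tendsto_measure_biInter_gt (fun _ _ => measurableSet_Ici.nullMeasurableSet)
    (fun _ _ _ hij => Ici_subset_Ici.2 (by linarith)) ⟨1, one_pos, measure_ne_top _ _⟩

lemma exists_dyadic_near {T u δ : ℝ} (hT : 0 < T) (hu : u ∈ Icc 0 T) (hδ : 0 < δ) :
    ∃ n i : ℕ, i ≤ 2 ^ n ∧ |T * i / 2 ^ n - u| < δ := by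
  obtain ⟨n, hn⟩ := exists_pow_lt_of_lt_one (div_pos hδ hT) one_half_lt_one
  have h2n : (0 : ℝ) < 2 ^ n := by positivity
  set m := ⌊u * 2 ^ n / T⌋₊
  have hm_le : T * m / 2 ^ n ≤ u := by
    have := Nat.floor_le (by have := hu.1; positivity : 0 ≤ u * 2 ^ n / T)
    rw [le_div_iff₀ hT] at this
    rw [div_le_iff₀ h2n]
    linarith
  have hm_gt : u - T / 2 ^ n < T * m / 2 ^ n := by
    have := Nat.lt_floor_add_one (u * 2 ^ n / T)
    rw [div_lt_iff₀ hT] at this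
    rw [lt_div_iff₀ h2n, sub_mul, div_mul_cancel₀ _ h2n.ne']
    linarith
  have hmesh : T / 2 ^ n < δ := by
    rw [lt_div_iff₀ hT, one_div_pow] at hn
    linarith [div_eq_mul_one_div T (2 ^ n : ℝ), mul_comm T (1 / 2 ^ n)]
  refine ⟨n, m, Nat.floor_le_of_le ?_, abs_sub_lt_iff.2 ⟨by linarith, by linarith⟩⟩
  rw [div_le_iff₀ hT]
  push_cast
  nlinarith [hu.2]

lemma sqrt_div_mul_exp_le {c a : ℝ} (hc : 1 ≤ c) (ha : 0 ≤ a) :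
    √c / a * exp (-a ^ 2 / (2 * c)) ≤ c / a * exp (-(1 / 2) * (a / c) ^ 2) := by
  have hc0 : 0 < c := zero_lt_one.trans_le hc
  have hsq : a ^ 2 / c ^ 2 ≤ a ^ 2 / c :=
    div_le_div_of_nonneg_left (sq_nonneg a) hc0 (by nlinarith)
  gcongr
  · exact (sqrt_le_left hc0.le).2 (by nlinarith)
  · rw [div_pow, show -a ^ 2 / (2 * c) = -(1 / 2) * (a ^ 2 / c) by ring]
    linarith

lemma exists_block_of_le_sSup {f : ℝ → ℝ} (hf : Continuous f) {c M a : ℝ} (hc : 1 < c)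
    (hM : 1 ≤ M) (ha : 0 ≤ a) (h : a ≤ sSup ((fun t => |f t| / √t) '' Icc 1 M)) :
    ∃ k ≤ ⌊logb c M⌋₊, ∃ u ∈ Icc 0 (c ^ k * c), a * √(c ^ k) ≤ |f u| := by
  have hcont : ContinuousOn (fun t => |f t| / √t) (Icc 1 M) :=
    hf.abs.continuousOn.div continuous_sqrt.continuousOn fun t ht =>
      (sqrt_pos.2 (zero_lt_one.trans_le ht.1)).ne'
  obtain ⟨u, hu, hsup⟩ := (isCompact_Icc.image_of_continuousOn hcont).sSup_mem
    ((nonempty_Icc.2 hM).image _)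
  have hu0 : 0 < u := zero_lt_one.trans_le hu.1
  set k := ⌊logb c u⌋₊
  have hku : c ^ k ≤ u := by
    rw [← rpow_natCast, ← le_logb_iff_rpow_le hc hu0]
    exact Nat.floor_le (logb_nonneg hc hu.1)
  have huk : u < c ^ k * c := by
    rw [← pow_succ, ← rpow_natCast, ← logb_lt_iff_lt_rpow hc hu0, Nat.cast_succ]
    exact Nat.lt_floor_add_one _
  refine ⟨k, Nat.floor_mono (logb_le_logb_of_le hc hu0 hu.2), u, ⟨hu0.le, huk.le⟩, ?_⟩
  rw [← hsup, le_div_iff₀ (sqrt_pos.2 hu0)] at h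
  exact (mul_le_mul_of_nonneg_left (sqrt_le_sqrt hku) ha).trans h

def firstPassage {Ω : Type*} (f : ℕ → Ω → ℝ) (x : ℝ) (k : ℕ) : Set Ω :=
  {ω | (∀ j < k, f j ω < x) ∧ x ≤ f k ω}

lemma setOf_exists_le_eq_biUnion_firstPassage {Ω : Type*} (f : ℕ → Ω → ℝ) (N : ℕ) (x : ℝ) :
    {ω | ∃ i ≤ N, x ≤ f i ω} = ⋃ k ∈ Finset.Iic N, firstPassage f x k := by
  classical
  ext ω
  simp only [firstPassage, mem_ofPred_eq, mem_iUnion, Finset.mem_Iic, exists_prop]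
  constructor
  · rintro ⟨i, hiN, hi⟩
    have hex : ∃ n, x ≤ f n ω := ⟨i, hi⟩
    exact ⟨Nat.find hex, (Nat.find_min' hex hi).trans hiN,
      fun j hj => not_le.1 (Nat.find_min hex hj), Nat.find_spec hex⟩
  · rintro ⟨k, hkN, -, hk⟩
    exact ⟨k, hkN, hk⟩

open Function in
lemma pairwise_disjoint_firstPassage {Ω : Type*} (f : ℕ → Ω → ℝ) (x : ℝ) :
    Pairwise (Disjoint on firstPassage f x) := by
  intro k l hkl
  rcases hkl.lt_or_gt with h | h
  · exact disjoint_left.2 fun ω hk hl => (hl.1 k h).not_ge hk.2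
  · exact disjoint_left.2 fun ω hk hl => (hk.1 l h).not_ge hl.2

lemma measurable_sub_iSup_comap_sub {Ω : Type*} (X : ℕ → Ω → ℝ) {m n : ℕ} (hmn : m ≤ n) :
    Measurable[⨆ i ∈ Ico m n, MeasurableSpace.comap (fun ω => X (i + 1) ω - X i ω) inferInstance]
      (fun ω => X n ω - X m ω) := by
  set F : ℕ → MeasurableSpace Ω :=
    fun i => MeasurableSpace.comap (fun ω => X (i + 1) ω - X i ω) inferInstance
  induction n, hmn using Nat.le_induction with
  | base => simp
  | succ n hmn ih =>
    have hprev : Measurable[⨆ i ∈ Ico m (n + 1), F i] fun ω => X n ω - X m ω :=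
      ih.mono (biSup_mono fun i hi => ⟨hi.1, hi.2.trans n.lt_succ_self⟩) le_rfl
    have hlast : Measurable[⨆ i ∈ Ico m (n + 1), F i] fun ω => X (n + 1) ω - X n ω :=
      (comap_measurable _).mono (le_iSup₂_of_le n ⟨hmn, n.lt_succ_self⟩ le_rfl) le_rfl
    simpa only [sub_add_sub_cancel'] using hprev.fun_add hlast

open Function in
lemma measure_biUnion_le_two_mul {Ω ι : Type*} [MeasurableSpace Ω] {P : Measure Ω}
    {A C : ι → Set Ω} {E : Set Ω} (s : Finset ι) (hAd : Pairwise (Disjoint on A))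
    (hA : ∀ i ∈ s, MeasurableSet (A i)) (hC : ∀ i ∈ s, MeasurableSet (C i))
    (hAC : ∀ i ∈ s, P (A i ∩ C i) = P (A i) * P (C i)) (hhalf : ∀ i ∈ s, 2⁻¹ ≤ P (C i))
    (hE : ∀ i ∈ s, A i ∩ C i ⊆ E) :
    P (⋃ i ∈ s, A i) ≤ 2 * P E := by
  have hdisj : (s : Set ι).PairwiseDisjoint fun i => A i ∩ C i :=
    fun i _ j _ hij => (hAd hij).mono inter_subset_left inter_subset_left
  calc P (⋃ i ∈ s, A i) ≤ ∑ i ∈ s, P (A i) := measure_biUnion_finset_le _ _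
    _ ≤ ∑ i ∈ s, 2 * P (A i ∩ C i) := by
        refine Finset.sum_le_sum fun i hi => ?_
        rw [hAC i hi, mul_comm (P (A i)), ← mul_assoc]
        calc P (A i) = 2 * 2⁻¹ * P (A i) := by
              rw [ENNReal.mul_inv_cancel two_ne_zero ENNReal.ofNat_ne_top, one_mul]
          _ ≤ 2 * P (C i) * P (A i) := by gcongr; exact hhalf i hi
    _ = 2 * P (⋃ i ∈ s, A i ∩ C i) := by
        rw [← Finset.mul_sum, measure_biUnion_finset hdisj fun i hi => (hA i hi).inter (hC i hi)]
    _ ≤ 2 * P E := by gcongr; exact iUnion₂_subset hE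

namespace IsBrownianMotion

variable {Ω : Type*} [MeasurableSpace Ω] {P : Measure Ω} {B : ℝ → Ω → ℝ}

lemma neg (hB : IsBrownianMotion P B) : IsBrownianMotion P fun t ω => -B t ω where
  isProb := hB.isProb
  init ω := by simp [hB.init ω]
  cont ω := (hB.cont ω).neg
  meas t := (hB.meas t).neg
  gauss s t hs hst := by
    have : (fun ω => -B t ω - -B s ω) = (fun x => -x) ∘ fun ω => B t ω - B s ω := by
      funext ω; simp only [Function.comp_apply]; ring
    rw [this, ← Measure.map_map (g := fun x : ℝ => -x) (f := fun ω => B t ω - B s ω)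
      measurable_neg ((hB.meas t).sub (hB.meas s)), hB.gauss s t hs hst, gaussianReal_map_neg,
      neg_zero]
  indep n ts h0 hts := by
    convert (hB.indep n ts h0 hts).comp (fun _ x => -x) (fun _ => measurable_neg) using 1
    funext i ω
    simp only [Function.comp_apply]
    ring

lemma map_eq_gaussianReal (hB : IsBrownianMotion P B) {t : ℝ} (ht : 0 ≤ t) :
    P.map (B t) = gaussianReal 0 t.toNNReal := by
  simpa [hB.init] using hB.gauss 0 t le_rfl ht

lemma iIndepFun_increments (hB : IsBrownianMotion P B) {g : ℕ → ℝ} (hg0 : 0 ≤ g 0)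
    (hg : Monotone g) : iIndepFun (fun i ω => B (g (i + 1)) ω - B (g i) ω) P := by
  rw [iIndepFun_iff_finset]
  intro s
  obtain ⟨N, hN⟩ : ∃ N, ∀ i ∈ s, i < N :=
    ⟨s.sup id + 1, fun i hi => Nat.lt_succ_of_le (Finset.le_sup (f := id) hi)⟩
  have hfin := hB.indep N (fun j => g j) (fun j => hg0.trans (hg j.val.zero_le)) fun i j h => hg h
  exact hfin.precomp (g := fun i : s => (⟨i, hN i i.2⟩ : Fin N))
    fun i j h => Subtype.ext (congrArg Fin.val h)

lemma indepFun_values_increment (hB : IsBrownianMotion P B) {g : ℕ → ℝ} (hg0 : g 0 = 0)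
    (hg : Monotone g) {k N : ℕ} (hkN : k ≤ N) :
    IndepFun (fun ω (j : Fin (k + 1)) => B (g j) ω) (fun ω => B (g N) ω - B (g k) ω) P := by
  have hind := indep_iSup_of_disjoint (fun i => ((hB.meas _).sub (hB.meas _)).comap_le)
    (hB.iIndepFun_increments hg0.ge hg).iIndep (S := Iio k) (T := Ici k)
    (Set.Iio_disjoint_Ici le_rfl)
  rw [IndepFun_iff_Indep]
  refine indep_of_indep_of_le_right (indep_of_indep_of_le_left hind ?_) ?_
  -- the σ-algebra on `Ω` is not the instance one, hence the explicit `@`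
  · refine (@measurable_pi_lambda _ _ _ (_) _ _ fun j => ?_).comap_le
    have := measurable_sub_iSup_comap_sub (fun i => B (g i)) (Nat.zero_le j)
    simp only [hg0, hB.init, sub_zero] at this
    exact this.mono (biSup_mono fun i hi => hi.2.trans_le (Nat.lt_succ_iff.1 j.2)) le_rfl
  · exact ((measurable_sub_iSup_comap_sub (fun i => B (g i)) hkN).mono
      (biSup_mono fun i hi => hi.1) le_rfl).comap_le

theorem measure_exists_le_le_two_mul (hB : IsBrownianMotion P B) {g : ℕ → ℝ} (hg0 : g 0 = 0)
    (hg : Monotone g) (N : ℕ) (x : ℝ) :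
    P {ω | ∃ i ≤ N, x ≤ B (g i) ω} ≤ 2 * P {ω | x ≤ B (g N) ω} := by
  set C : ℕ → Set Ω := fun k => {ω | 0 ≤ B (g N) ω - B (g k) ω}
  have hA : ∀ k, firstPassage (fun i => B (g i)) x k = (fun ω (j : Fin (k + 1)) => B (g j) ω) ⁻¹'
      {w | (∀ j : Fin (k + 1), (j : ℕ) < k → w j < x) ∧ x ≤ w (Fin.last k)} := by
    intro k
    ext ω
    simp only [firstPassage, mem_ofPred_eq, mem_preimage, Fin.val_last]
    exact and_congr_left' ⟨fun h j hj => h j hj, fun h j hj => h ⟨j, by omega⟩ hj⟩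
  have hS : ∀ k, MeasurableSet
      {w : Fin (k + 1) → ℝ | (∀ j : Fin (k + 1), (j : ℕ) < k → w j < x) ∧ x ≤ w (Fin.last k)} := by
    intro k
    measurability
  have hvec : ∀ k, Measurable fun ω (j : Fin (k + 1)) => B (g j) ω :=
    fun k => measurable_pi_lambda _ fun j => hB.meas _
  have hinc : ∀ k, Measurable fun ω => B (g N) ω - B (g k) ω :=
    fun k => (hB.meas _).sub (hB.meas _)
  rw [setOf_exists_le_eq_biUnion_firstPassage]
  refine measure_biUnion_le_two_mul (C := C) _ (pairwise_disjoint_firstPassage _ x) (fun k _ => ?_) (fun k _ => ?_)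
    (fun k hk => ?_) (fun k hk => ?_) fun k _ => ?_
  · rw [hA k]
    exact hvec k (hS k)
  · exact hinc k measurableSet_Ici
  · rw [hA k]
    exact (hB.indepFun_values_increment hg0 hg (Finset.mem_Iic.1 hk)).measure_inter_preimage_eq_mul
      _ _ (hS k) measurableSet_Ici
  · have hk0 : 0 ≤ g k := hg0 ▸ hg k.zero_le
    rw [show C k = (fun ω => B (g N) ω - B (g k) ω) ⁻¹' Ici 0 from rfl,
      ← Measure.map_apply (hinc k) measurableSet_Ici,
      hB.gauss _ _ hk0 (hg (Finset.mem_Iic.1 hk))]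
    exact inv_two_le_gaussianReal_Ici_zero _
  · rintro ω ⟨⟨-, hk⟩, hkN⟩
    exact hk.trans (sub_nonneg.1 hkN)

lemma measure_le_eq_gaussianReal_Ici (hB : IsBrownianMotion P B) {t : ℝ} (ht : 0 ≤ t) (x : ℝ) :
    P {ω | x ≤ B t ω} = gaussianReal 0 t.toNNReal (Ici x) := by
  rw [← hB.map_eq_gaussianReal ht, Measure.map_apply (hB.meas t) measurableSet_Ici]
  rfl

theorem measure_exists_le_le_two_mul_gaussianReal (hB : IsBrownianMotion P B) {T : ℝ} (hT : 0 < T)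
    (x : ℝ) : P {ω | ∃ u ∈ Icc 0 T, x ≤ B u ω} ≤ 2 * gaussianReal 0 T.toNNReal (Ici x) := by
  set G : ℝ → ℕ → Set Ω := fun y n => {ω | ∃ i : ℕ, i ≤ 2 ^ n ∧ y ≤ B (T * i / 2 ^ n) ω}
  have hG : ∀ y n, P (G y n) ≤ 2 * gaussianReal 0 T.toNNReal (Ici y) := by
    intro y n
    have hgrid : Monotone fun i : ℕ => T * i / 2 ^ n := fun i j hij => by dsimp only; gcongr
    have := hB.measure_exists_le_le_two_mul (g := fun i : ℕ => T * i / 2 ^ n) (by simp) hgrid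
      (2 ^ n) y
    simpa [hB.measure_le_eq_gaussianReal_Ici hT.le] using this
  have hnested : ∀ y, Monotone (G y) := by
    refine fun y => monotone_nat_of_le_succ fun n ω ⟨i, hi, hy⟩ => ⟨2 * i, by omega, ?_⟩
    convert hy using 2
    push_cast
    ring
  have hcover : ∀ ε > 0, {ω | ∃ u ∈ Icc 0 T, x ≤ B u ω} ⊆ ⋃ n, G (x - ε) n := by
    rintro ε hε ω ⟨u, hu, hxu⟩
    obtain ⟨δ, hδ, hcont⟩ := Metric.continuousAt_iff.1 (hB.cont ω).continuousAt ε hε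
    obtain ⟨n, i, hi, hiu⟩ := exists_dyadic_near hT hu hδ
    have := hcont (show dist _ u < δ from hiu)
    rw [Real.dist_eq, abs_sub_lt_iff] at this
    exact mem_iUnion.2 ⟨n, i, hi, by linarith⟩
  have hε : ∀ ε > 0, P {ω | ∃ u ∈ Icc 0 T, x ≤ B u ω} ≤
      2 * gaussianReal 0 T.toNNReal (Ici (x - ε)) := fun ε hε =>
    (measure_mono (hcover ε hε)).trans <|
      ((hnested _).measure_iUnion (μ := P)).trans_le (iSup_le (hG _))
  exact ge_of_tendsto (ENNReal.Tendsto.const_mul (tendsto_measure_Ici_sub _ x)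
    (Or.inr ENNReal.ofNat_ne_top)) (eventually_nhdsWithin_of_forall hε)

theorem measure_exists_le_abs_le (hB : IsBrownianMotion P B) {T x : ℝ} (hT : 0 < T)
    (hx : 0 < x) : P {ω | ∃ u ∈ Icc 0 T, x ≤ |B u ω|} ≤
      ENNReal.ofReal (4 * (√T / x * exp (-x ^ 2 / (2 * T)))) := by
  have hv : T.toNNReal ≠ 0 := by simpa using hT
  have hone : ∀ {W : ℝ → Ω → ℝ}, IsBrownianMotion P W →
      P {ω | ∃ u ∈ Icc 0 T, x ≤ W u ω} ≤ 2 * ENNReal.ofReal (√T / x * exp (-x ^ 2 / (2 * T))) :=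
    fun hW => (hW.measure_exists_le_le_two_mul_gaussianReal hT x).trans <| by
      gcongr
      simpa [Real.coe_toNNReal _ hT.le] using gaussianReal_Ici_le hv hx
  calc P {ω | ∃ u ∈ Icc 0 T, x ≤ |B u ω|}
      ≤ P ({ω | ∃ u ∈ Icc 0 T, x ≤ B u ω} ∪ {ω | ∃ u ∈ Icc 0 T, x ≤ -B u ω}) :=
        measure_mono fun ω ⟨u, hu, hxu⟩ => (le_abs.1 hxu).imp (⟨u, hu, ·⟩) (⟨u, hu, ·⟩)
    _ ≤ 2 * ENNReal.ofReal (√T / x * exp (-x ^ 2 / (2 * T))) +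
          2 * ENNReal.ofReal (√T / x * exp (-x ^ 2 / (2 * T))) :=
        (measure_union_le _ _).trans (add_le_add (hone hB) (hone hB.neg))
    _ = ENNReal.ofReal (4 * (√T / x * exp (-x ^ 2 / (2 * T)))) := by
        rw [ENNReal.ofReal_mul zero_le_four, ENNReal.ofReal_ofNat]
        ring

theorem measure_exists_mul_sqrt_le_abs_le (hB : IsBrownianMotion P B) {c a t : ℝ} (hc : 0 < c)
    (ha : 0 < a) (ht : 0 < t) : P {ω | ∃ u ∈ Icc 0 (t * c), a * √t ≤ |B u ω|} ≤
      ENNReal.ofReal (4 * (√c / a * exp (-a ^ 2 / (2 * c)))) := by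
  have hscale : √(t * c) / (a * √t) * exp (-(a * √t) ^ 2 / (2 * (t * c))) =
      √c / a * exp (-a ^ 2 / (2 * c)) := by
    have hst : 0 < √t := sqrt_pos.2 ht
    rw [sqrt_mul ht.le, mul_pow, sq_sqrt ht.le]
    congr 1
    · field_simp
    · congr 1
      field_simp
  simpa only [hscale] using
    hB.measure_exists_le_abs_le (x := a * √t) (mul_pos ht hc) (by positivity)

end IsBrownianMotion

/-- Lemma 3.1 (LILbound): for a standard Brownian motion `B`, for all `c > 1`,
`M > 1`, `a > 0`,
`P( sup_{1 ≤ t ≤ M} |B_t|/√t ≥ a ) ≤ 4·((log M)/(log c) + 1)·(c/a)·exp(−(1/2)(a/c)²)`. -/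
theorem favorite_points_LILbound
    {Ω : Type*} [MeasurableSpace Ω] (P : Measure Ω) (B : ℝ → Ω → ℝ)
    (hB : IsBrownianMotion P B) (c M a : ℝ) (hc : 1 < c) (hM : 1 < M) (ha : 0 < a) :
    P {ω | a ≤ sSup ((fun t => |B t ω| / Real.sqrt t) '' Icc (1 : ℝ) M)} ≤
      ENNReal.ofReal (4 * (Real.log M / Real.log c + 1) * (c / a) *
        Real.exp (-(1 / 2) * (a / c) ^ 2)) := by
  have hc0 : 0 < c := zero_lt_one.trans hc
  set n := ⌊logb c M⌋₊
  have hcover : {ω | a ≤ sSup ((fun t => |B t ω| / √t) '' Icc 1 M)} ⊆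
      ⋃ k ∈ Finset.range (n + 1), {ω | ∃ u ∈ Icc 0 (c ^ k * c), a * √(c ^ k) ≤ |B u ω|} :=
    fun ω hω => by
      obtain ⟨k, hk, hblock⟩ := exists_block_of_le_sSup (hB.cont ω) hc hM.le ha.le hω
      exact mem_biUnion (Finset.mem_range_succ_iff.2 hk) hblock
  have hcount : ((n + 1 : ℕ) : ℝ) ≤ log M / log c + 1 := by
    push_cast
    linarith [Nat.floor_le (logb_nonneg hc hM.le), log_div_log (b := c) (x := M)]
  calc _ ≤ ∑ k ∈ Finset.range (n + 1),
        P {ω | ∃ u ∈ Icc 0 (c ^ k * c), a * √(c ^ k) ≤ |B u ω|} :=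
        (measure_mono hcover).trans (measure_biUnion_finset_le _ _)
    _ ≤ ∑ k ∈ Finset.range (n + 1), ENNReal.ofReal (4 * (√c / a * exp (-a ^ 2 / (2 * c)))) :=
        Finset.sum_le_sum fun k _ => hB.measure_exists_mul_sqrt_le_abs_le hc0 ha (by positivity)
    _ = ENNReal.ofReal ((n + 1 : ℕ) * (4 * (√c / a * exp (-a ^ 2 / (2 * c))))) := by
        rw [Finset.sum_const, Finset.card_range, nsmul_eq_mul,
          ENNReal.ofReal_mul (Nat.cast_nonneg _), ENNReal.ofReal_natCast]
    _ ≤ _ := by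
        refine ENNReal.ofReal_le_ofReal ?_
        calc _ ≤ (log M / log c + 1) * (4 * (c / a * exp (-(1 / 2) * (a / c) ^ 2))) := by
              gcongr ?_ * (4 * ?_)
              · exact (Nat.cast_nonneg _).trans hcount
              · exact sqrt_div_mul_exp_le hc.le ha.le
          _ = _ := by ring
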